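/- arXiv:2401.09680 — 7 statements merged into one kernel-verified Lean document; each statement's English description precedes it below -/
import Mathlib

section
/- Let J ≥ 1, δ > 0, R > 0, and for j = 1,…,J let S_j > 0, q_j > 0, p_j > 0. Set A = Σ_j S_j, T = Σ_j p_j/q_j, λ = δ·A/(R + T) − 1, and b̂_j = S_j·(R + T)/(p_j·A) − 1/q_j. Then 1 + λ > 0, for every j one has 1 + b̂_j·q_j > 0, and the KKT stationarity conditions hold: δ·q_j·S_j/(1 + b̂_j·q_j) = p_j·(1 + λ) for every j = 1,…,J. -/
/-- With `A = Σ_j S_j`, `T = Σ_j p_j/q_j`, `λ = δ·A/(R + T) − 1` and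
`b̂_j = S_j·(R + T)/(p_j·A) − 1/q_j`, one has `1 + λ > 0`, `1 + b̂_j·q_j > 0` for every
`j`, and the KKT stationarity conditions `δ·q_j·S_j/(1 + b̂_j·q_j) = p_j·(1 + λ)` hold. -/
theorem stmt5 (J : ℕ) (hJ : 1 ≤ J) (δ R : ℝ) (hδ : 0 < δ) (hR : 0 < R)
    (S q p : Fin J → ℝ) (hS : ∀ j, 0 < S j) (hq : ∀ j, 0 < q j) (hp : ∀ j, 0 < p j)
    (A T lam : ℝ) (hA : A = ∑ j, S j) (hT : T = ∑ j, p j / q j)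
    (hlam : lam = δ * A / (R + T) - 1)
    (bhat : Fin J → ℝ) (hbhat : ∀ j, bhat j = S j * (R + T) / (p j * A) - 1 / q j) :
    0 < 1 + lam ∧
    (∀ j, 0 < 1 + bhat j * q j) ∧
    ∀ j, δ * q j * S j / (1 + bhat j * q j) = p j * (1 + lam) := by
  have hne : (Finset.univ : Finset (Fin J)).Nonempty := by
    have : Nonempty (Fin J) := ⟨⟨0, hJ⟩⟩
    exact Finset.univ_nonempty
  have hApos : 0 < A := by
    rw [hA]; exact Finset.sum_pos (fun j _ => hS j) hne
  have hTpos : 0 ≤ T := by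
    rw [hT]; exact Finset.sum_nonneg (fun j _ => (div_pos (hp j) (hq j)).le)
  have hRT : 0 < R + T := by linarith
  have hkey : ∀ j, 1 + bhat j * q j = S j * (R + T) * q j / (p j * A) := by
    intro j
    have hqj := (hq j).ne'
    have hpj := (hp j).ne'
    have hAne := hApos.ne'
    rw [hbhat j]
    field_simp
    ring
  have hpos : ∀ j, 0 < 1 + bhat j * q j := by
    intro j
    have hSj := hS j; have hqj := hq j; have hpj := hp j
    rw [hkey j]
    exact div_pos (by positivity) (by positivity)
  refine ⟨?_, hpos, ?_⟩
  · rw [hlam]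
    have : 0 < δ * A / (R + T) := by positivity
    linarith
  · intro j
    rw [hkey j, hlam]
    have hSj := hS j; have hqj := hq j; have hpj := hp j
    field_simp
    ring
end

section
/- Let q > 0, c > 0, S > 0, A > 0, and R + B > 0. Define the RSU utility V(p) = (p − c)·( S·(R + B)/(A·p) + S/(A·q) − 1/q ) for p > 0. Then V is strictly concave on (0, ∞); in particular its second derivative equals −2·c·S·(R + B)/(A·p³) < 0 for every p > 0. -/
/-! Away from `p = 0` the utility is an affine function of `p` plus `−c·k/p`, where
`k = S·(R + B)/A > 0`. Its second derivative is therefore `−2·c·k/p³`, negative for `p > 0`,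
which gives strict concavity on `(0, ∞)`. -/

open Set Filter Topology

section AffineAddMulInv

variable (a b d : ℝ) {x : ℝ}

theorem hasDerivAt_affine_add_mul_inv (hx : x ≠ 0) :
    HasDerivAt (fun y => a + b * y + d * y⁻¹) (b - d / x ^ 2) x := by
  refine ((((hasDerivAt_id' x).const_mul b).const_add a).add
    ((hasDerivAt_inv hx).const_mul d)).congr_deriv ?_
  ring

theorem deriv_deriv_affine_add_mul_inv (hx : x ≠ 0) :
    deriv (deriv fun y => a + b * y + d * y⁻¹) x = 2 * d / x ^ 3 := by
  have hderiv : deriv (fun y => a + b * y + d * y⁻¹) =ᶠ[𝓝 x] fun y => b - d * (y ^ 2)⁻¹ := by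
    filter_upwards [isOpen_ne.mem_nhds hx] with y hy
    rw [(hasDerivAt_affine_add_mul_inv a b d hy).deriv, div_eq_mul_inv]
  have hsq : HasDerivAt (fun y : ℝ => y ^ 2) (2 * x) x := by
    simpa using hasDerivAt_pow 2 x
  have hderiv' : HasDerivAt (fun y => b - d * (y ^ 2)⁻¹) (2 * d / x ^ 3) x := by
    refine (((hsq.inv (pow_ne_zero 2 hx)).const_mul d).const_sub b).congr_deriv ?_
    field_simp
  rw [hderiv.deriv_eq, hderiv'.deriv]

theorem strictConcaveOn_affine_add_mul_inv (hd : d < 0) :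
    StrictConcaveOn ℝ (Ioi 0) fun y => a + b * y + d * y⁻¹ := by
  refine strictConcaveOn_of_deriv2_neg' (convex_Ioi 0) ?_ fun x (hx : 0 < x) => ?_
  · exact fun x (hx : 0 < x) =>
      (hasDerivAt_affine_add_mul_inv a b d hx.ne').continuousAt.continuousWithinAt
  · rw [Function.iterate_succ_apply, Function.iterate_one,
      deriv_deriv_affine_add_mul_inv a b d hx.ne']
    exact div_neg_of_neg_of_pos (by linarith) (by positivity)

end AffineAddMulInv

theorem stmt8_general (q c S A R B : ℝ) (hc : 0 < c) (hS : 0 < S) (hA : 0 < A)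
    (hRB : 0 < R + B) :
    StrictConcaveOn ℝ (Set.Ioi (0 : ℝ))
      (fun p : ℝ => (p - c) * (S * (R + B) / (A * p) + S / (A * q) - 1 / q)) ∧
    ∀ p : ℝ, 0 < p →
      deriv (deriv
        (fun p : ℝ => (p - c) * (S * (R + B) / (A * p) + S / (A * q) - 1 / q))) p
          = -(2 * c * S * (R + B)) / (A * p ^ 3) ∧
      -(2 * c * S * (R + B)) / (A * p ^ 3) < 0 := by
  set k := S * (R + B) / A
  set m := S / (A * q) - 1 / q
  have hutility : EqOn (fun p : ℝ => (p - c) * (S * (R + B) / (A * p) + m))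
      (fun p => (k - m * c) + m * p + -(c * k) * p⁻¹) {0}ᶜ := by
    intro p (hp : p ≠ 0)
    simp only [k, m]
    field_simp
    ring
  have hck : -(c * k) < 0 := neg_neg_of_pos (by positivity)
  simp only [add_sub_assoc]
  refine ⟨(strictConcaveOn_affine_add_mul_inv _ _ _ hck).congr
    (hutility.mono fun p (hp : 0 < p) => hp.ne').symm, fun p hp => ⟨?_, ?_⟩⟩
  · rw [(hutility.eventuallyEq_of_mem (isOpen_ne.mem_nhds hp.ne')).deriv.deriv_eq,
      deriv_deriv_affine_add_mul_inv _ _ _ hp.ne']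
    simp only [k]
    field_simp
  · exact div_neg_of_neg_of_pos (neg_neg_of_pos (by positivity)) (by positivity)

/-- The RSU utility `V(p) = (p − c)·(S·(R + B)/(A·p) + S/(A·q) − 1/q)` is strictly
concave on `(0, ∞)`, with second derivative `−2·c·S·(R + B)/(A·p³) < 0` there. -/
theorem stmt8 (q c S A R B : ℝ) (hq : 0 < q) (hc : 0 < c) (hS : 0 < S) (hA : 0 < A)
    (hRB : 0 < R + B) :
    StrictConcaveOn ℝ (Set.Ioi (0 : ℝ))
      (fun p : ℝ => (p - c) * (S * (R + B) / (A * p) + S / (A * q) - 1 / q)) ∧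
    ∀ p : ℝ, 0 < p →
      deriv (deriv
        (fun p : ℝ => (p - c) * (S * (R + B) / (A * p) + S / (A * q) - 1 / q))) p
          = -(2 * c * S * (R + B)) / (A * p ^ 3) ∧
      -(2 * c * S * (R + B)) / (A * p ^ 3) < 0 :=
  stmt8_general q c S A R B hc hS hA hRB
end

section
/- Let q > 0, c > 0, S > 0, R + B > 0, and A > S. Define V(p) = (p − c)·( S·(R + B)/(A·p) + S/(A·q) − 1/q ) for p > 0. Then V′(p) = (S − A)/(A·q) + c·S·(R + B)/(A·p²), the point φ = √( q·c·S·(R + B)/(A − S) ) is the unique p > 0 with V′(p) = 0, and φ is the unique maximizer of V over (0, ∞). -/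
/-!
With `K = S·(R + B)/A` and `a = (A − S)/(A·q) > 0` the utility is `V(p) = (p − c)·(K/p − a)`,
so `V′(p) = c·K/p² − a`, whose only positive root `φ` satisfies `a·φ² = c·K`. Using this relation
one gets the exact identity `V(φ) − V(p) = a·(p − φ)²/p`, which is nonnegative for `p > 0` and
vanishes only at `p = φ`.
-/

noncomputable def rsuUtility (c K a p : ℝ) : ℝ := (p - c) * (K / p - a)

section RsuUtility

variable {c K a φ p : ℝ}

theorem hasDerivAt_rsuUtility (hp : p ≠ 0) :
    HasDerivAt (rsuUtility c K a) (c * K / p ^ 2 - a) p := by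
  have hdemand : HasDerivAt (fun x => K / x - a) (-(K / p ^ 2)) p := by
    simpa [div_eq_mul_inv] using ((hasDerivAt_inv hp).const_mul K).sub_const a
  refine (((hasDerivAt_id' p).sub_const c).mul hdemand).congr_deriv ?_
  field_simp
  ring

theorem rsuUtility_sub_rsuUtility (hφ : a * φ ^ 2 = c * K) (hφ0 : φ ≠ 0) (hp : p ≠ 0) :
    rsuUtility c K a φ - rsuUtility c K a p = a * (p - φ) ^ 2 / p := by
  unfold rsuUtility
  field_simp
  linear_combination (p - φ) * hφ

theorem eq_of_deriv_rsuUtility_eq_zero (ha : a ≠ 0) (hφ : a * φ ^ 2 = c * K) (hφ0 : 0 < φ)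
    (hp : 0 < p) (hroot : c * K / p ^ 2 - a = 0) : p = φ := by
  have hsq : a * p ^ 2 = a * φ ^ 2 := by
    rw [hφ]
    field_simp at hroot
    linarith
  exact (pow_left_inj₀ hp.le hφ0.le two_ne_zero).1 (mul_left_cancel₀ ha hsq)

theorem rsuUtility_le_and_eq_imp_eq (ha : 0 < a) (hφ : a * φ ^ 2 = c * K) (hφ0 : φ ≠ 0)
    (hp : 0 < p) :
    rsuUtility c K a p ≤ rsuUtility c K a φ ∧
      (rsuUtility c K a p = rsuUtility c K a φ → p = φ) := by
  have hgap := rsuUtility_sub_rsuUtility hφ hφ0 hp.ne'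
  refine ⟨sub_nonneg.1 (hgap ▸ by positivity), fun heq => ?_⟩
  by_contra hne
  have hgap_pos : 0 < a * (p - φ) ^ 2 / p :=
    div_pos (mul_pos ha (sq_pos_of_ne_zero (sub_ne_zero.2 hne))) hp
  rw [← hgap, heq, sub_self] at hgap_pos
  exact hgap_pos.false

end RsuUtility

/-- For `V(p) = (p − c)·(S·(R + B)/(A·p) + S/(A·q) − 1/q)` with `A > S`:
`V′(p) = (S − A)/(A·q) + c·S·(R + B)/(A·p²)` on `(0, ∞)`, the point
`φ = √(q·c·S·(R + B)/(A − S))` is the unique positive root of `V′`, and `φ` is the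
unique maximizer of `V` over `(0, ∞)`. -/
theorem stmt9 (q c S A R B : ℝ) (hq : 0 < q) (hc : 0 < c) (hS : 0 < S)
    (hRB : 0 < R + B) (hAS : S < A)
    (V : ℝ → ℝ)
    (hV : ∀ p, V p = (p - c) * (S * (R + B) / (A * p) + S / (A * q) - 1 / q))
    (φ : ℝ) (hφ : φ = Real.sqrt (q * c * S * (R + B) / (A - S))) :
    (∀ p : ℝ, 0 < p → deriv V p = (S - A) / (A * q) + c * S * (R + B) / (A * p ^ 2)) ∧
    (0 < φ ∧ deriv V φ = 0 ∧ ∀ p : ℝ, 0 < p → deriv V p = 0 → p = φ) ∧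
    (∀ p : ℝ, 0 < p → V p ≤ V φ ∧ (V p = V φ → p = φ)) := by
  have hA : 0 < A := hS.trans hAS
  have hSA : 0 < A - S := sub_pos.2 hAS
  have ha : 0 < (A - S) / (A * q) := div_pos hSA (mul_pos hA hq)
  have hVeq : V = rsuUtility c (S * (R + B) / A) ((A - S) / (A * q)) := by
    funext p
    rw [hV, rsuUtility]
    field_simp
    ring
  have hderiv : ∀ p, 0 < p →
      deriv V p = c * (S * (R + B) / A) / p ^ 2 - (A - S) / (A * q) := fun p hp => by
    rw [hVeq, (hasDerivAt_rsuUtility hp.ne').deriv]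
  have hφ0 : 0 < φ := hφ ▸ Real.sqrt_pos.2 (by positivity)
  have hφsq : (A - S) / (A * q) * φ ^ 2 = c * (S * (R + B) / A) := by
    rw [hφ, Real.sq_sqrt (by positivity)]
    field_simp [hSA.ne']
  refine ⟨fun p hp => ?_, ⟨hφ0, ?_, fun p hp hroot => ?_⟩, fun p hp => ?_⟩
  · rw [hderiv p hp]
    field_simp
    ring
  · rw [hderiv φ hφ0, ← hφsq]
    field_simp
    ring
  · exact eq_of_deriv_rsuUtility_eq_zero ha.ne' hφsq hφ0 hp (hderiv p hp ▸ hroot)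
  · exact hVeq ▸ rsuUtility_le_and_eq_imp_eq ha hφsq hφ0.ne' hp
end

section
/- Consider J RSUs and I UAVs. For each j = 1,…,J let c^j > 0, q^j > 0, p̄^j > c^j, and for each i = 1,…,I let δ_i > 0 and S_i^j > 0, and assume c^j ≤ √(δ_i·S_i^j·q^j·c^j) ≤ p̄^j for all i, j. Let RSU j's strategy set be the box [c^j, p̄^j]^I and let its utility for a price vector p^j = (p_1^j,…,p_I^j) be V_j(p^j) = Σ_{i=1}^I (p_i^j − c^j)·( δ_i·S_i^j/p_i^j − 1/q^j ). Then the profile given by (p_i^j)* = √(δ_i·S_i^j·q^j·c^j) for all i, j is a Nash equilibrium of the pricing game: for every j and every p^j ∈ [c^j, p̄^j]^I, V_j((p^j)*) ≥ V_j(p^j). -/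
/-- In the RSU pricing game with inactive UAV budgets, the profile
`(p_i^j)* = √(δ_i·S_i^j·q^j·c^j)` is a Nash equilibrium: no RSU `j` can improve its
utility `V_j(p^j) = Σ_i (p_i^j − c^j)·(δ_i·S_i^j/p_i^j − 1/q^j)` by unilaterally
choosing another price vector in its box `[c^j, p̄^j]^I`. -/
theorem stmt11 (J I : ℕ) (c q pbar : Fin J → ℝ) (δ : Fin I → ℝ)
    (S : Fin I → Fin J → ℝ)
    (hc : ∀ j, 0 < c j) (hq : ∀ j, 0 < q j) (hpbar : ∀ j, c j < pbar j)
    (hδ : ∀ i, 0 < δ i) (hS : ∀ i j, 0 < S i j)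
    (hin : ∀ i j, c j ≤ Real.sqrt (δ i * S i j * q j * c j) ∧
                  Real.sqrt (δ i * S i j * q j * c j) ≤ pbar j) :
    ∀ j : Fin J, ∀ pj : Fin I → ℝ, (∀ i, pj i ∈ Set.Icc (c j) (pbar j)) →
      ∑ i, (pj i - c j) * (δ i * S i j / pj i - 1 / q j)
        ≤ ∑ i, (Real.sqrt (δ i * S i j * q j * c j) - c j)
            * (δ i * S i j / Real.sqrt (δ i * S i j * q j * c j) - 1 / q j) := by
  intro j pj hpj
  apply Finset.sum_le_sum
  intro i _
  set s := Real.sqrt (δ i * S i j * q j * c j) with hs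
  have ha : 0 < δ i * S i j * q j * c j :=
    mul_pos (mul_pos (mul_pos (hδ i) (hS i j)) (hq j)) (hc j)
  have hs2 : s ^ 2 = δ i * S i j * q j * c j := Real.sq_sqrt ha.le
  have hsp : 0 < s := Real.sqrt_pos.mpr ha
  have hp0 : 0 < pj i := lt_of_lt_of_le (hc j) (hpj i).1
  rw [div_sub_div _ _ (ne_of_gt hp0) (ne_of_gt (hq j)),
      div_sub_div _ _ (ne_of_gt hsp) (ne_of_gt (hq j)),
      mul_div_assoc', mul_div_assoc', div_le_div_iff₀ (mul_pos hp0 (hq j)) (mul_pos hsp (hq j))]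
  have hA : δ i * S i j * q j = s ^ 2 / c j := by
    rw [eq_div_iff (hc j).ne']; linarith [hs2]
  rw [hA]
  have key : (s - c j) * (s ^ 2 / c j - s * 1) * (pj i * q j)
      - (pj i - c j) * (s ^ 2 / c j - pj i * 1) * (s * q j)
      = s * q j / c j * (c j * (pj i - s) ^ 2) := by
    field_simp [(hc j).ne']; ring
  nlinarith [mul_nonneg (div_nonneg (mul_pos hsp (hq j)).le (hc j).le)
    (mul_nonneg (hc j).le (sq_nonneg (pj i - s))), key]
end

section
/- Let I ≥ 1, q > 0, c > 0, and for each i = 1,…,I let S_i > 0, A_i > S_i, R_i > 0, and B_i ≥ 0. Define V(p_1,…,p_I) = Σ_{i=1}^I (p_i − c)·( S_i·(R_i + B_i)/(A_i·p_i) + S_i/(A_i·q) − 1/q ) on (0, ∞)^I. Then V has a unique maximizer on (0, ∞)^I, given componentwise by p_i* = √( q·c·S_i·(R_i + B_i)/(A_i − S_i) ). -/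
/-!
With `K = S(R + B)/A` and `m = (A − S)/(A q) > 0`, the `i`-th summand of the utility is
`(p − c)(K/p − m)`, a function of `p_i` alone. For `s > 0` with `m s² = c K` one has the exact gap
`(s − c)(K/s − m) − (x − c)(K/x − m) = m (x − s)² / x`, so on `x > 0` each summand is uniquely
maximised at `s = √(cK/m)`, which is the stated `p_i*`. A separable sum is then uniquely maximised
at the vector of these maximisers.
-/

open Finset

noncomputable def rsuProfit (c K m x : ℝ) : ℝ := (x - c) * (K / x - m)

lemma rsuProfit_sub_rsuProfit {c K m s x : ℝ} (hs : s ≠ 0) (hx : x ≠ 0)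
    (hsq : s ^ 2 * m = c * K) :
    rsuProfit c K m s - rsuProfit c K m x = m * (x - s) ^ 2 / x := by
  unfold rsuProfit
  field_simp
  linear_combination (x - s) * hsq

lemma rsuProfit_le_and_eq_sqrt {c K m x : ℝ} (hc : 0 < c) (hK : 0 < K) (hm : 0 < m)
    (hx : 0 < x) :
    rsuProfit c K m x ≤ rsuProfit c K m √(c * K / m) ∧
      (rsuProfit c K m x = rsuProfit c K m √(c * K / m) → x = √(c * K / m)) := by
  set s := √(c * K / m)
  have hs : 0 < s := Real.sqrt_pos.mpr (by positivity)
  have hsq : s ^ 2 * m = c * K := by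
    rw [Real.sq_sqrt (by positivity), div_mul_cancel₀ _ hm.ne']
  have hgap := rsuProfit_sub_rsuProfit hs.ne' hx.ne' hsq
  have hgap_nonneg : 0 ≤ m * (x - s) ^ 2 / x := by positivity
  refine ⟨sub_nonneg.mp (hgap ▸ hgap_nonneg), fun heq => ?_⟩
  have : m * (x - s) ^ 2 / x = 0 := by rw [← hgap, heq, sub_self]
  simpa [hm.ne', hx.ne', sub_eq_zero] using this

lemma sum_le_sum_and_eq_of_unique_max {ι α : Type*} [Fintype ι] {D : Set α}
    {f : ι → α → ℝ} {s p : ι → α} (hp : ∀ i, p i ∈ D)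
    (hmax : ∀ i, ∀ x ∈ D, f i x ≤ f i (s i) ∧ (f i x = f i (s i) → x = s i)) :
    ∑ i, f i (p i) ≤ ∑ i, f i (s i) ∧ (∑ i, f i (p i) = ∑ i, f i (s i) → p = s) := by
  have hle : ∀ i ∈ univ, f i (p i) ≤ f i (s i) := fun i _ => (hmax i (p i) (hp i)).1
  refine ⟨sum_le_sum hle, fun heq => funext fun i => ?_⟩
  exact (hmax i (p i) (hp i)).2 ((sum_eq_sum_iff_of_le hle).mp heq i (mem_univ i))

theorem stmt12_general (I : ℕ) (q c : ℝ) (hq : 0 < q) (hc : 0 < c)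
    (S A R B : Fin I → ℝ) (hS : ∀ i, 0 < S i) (hA : ∀ i, S i < A i)
    (hR : ∀ i, 0 < R i) (hB : ∀ i, 0 ≤ B i)
    (V : (Fin I → ℝ) → ℝ)
    (hV : ∀ p, V p =
      ∑ i, (p i - c) * (S i * (R i + B i) / (A i * p i) + S i / (A i * q) - 1 / q))
    (pstar : Fin I → ℝ)
    (hpstar : ∀ i, pstar i = Real.sqrt (q * c * S i * (R i + B i) / (A i - S i))) :
    (∀ i, 0 < pstar i) ∧
    ∀ p : Fin I → ℝ, (∀ i, 0 < p i) → V p ≤ V pstar ∧ (V p = V pstar → p = pstar) := by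
  set K : Fin I → ℝ := fun i => S i * (R i + B i) / A i
  set m : Fin I → ℝ := fun i => (A i - S i) / (A i * q)
  have hApos : ∀ i, 0 < A i := fun i => (hS i).trans (hA i)
  have hK : ∀ i, 0 < K i := fun i =>
    div_pos (mul_pos (hS i) (add_pos_of_pos_of_nonneg (hR i) (hB i))) (hApos i)
  have hm : ∀ i, 0 < m i := fun i => div_pos (sub_pos.mpr (hA i)) (mul_pos (hApos i) hq)
  have hV' : ∀ p, V p = ∑ i, rsuProfit c (K i) (m i) (p i) := fun p => by
    rw [hV]
    refine sum_congr rfl fun i _ => ?_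
    unfold rsuProfit K m
    field_simp [(hApos i).ne']
    ring
  have hpstar' : ∀ i, pstar i = √(c * K i / m i) := fun i => by
    rw [hpstar]
    congr 1
    simp only [K, m]
    field_simp [(hApos i).ne', (sub_pos.mpr (hA i)).ne']
  have hmax : ∀ i, ∀ x ∈ Set.Ioi (0 : ℝ),
      rsuProfit c (K i) (m i) x ≤ rsuProfit c (K i) (m i) (pstar i) ∧
        (rsuProfit c (K i) (m i) x = rsuProfit c (K i) (m i) (pstar i) → x = pstar i) :=
    fun i x hx => hpstar' i ▸ rsuProfit_le_and_eq_sqrt hc (hK i) (hm i) hx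
  refine ⟨fun i => hpstar' i ▸ Real.sqrt_pos.mpr (div_pos (mul_pos hc (hK i)) (hm i)),
    fun p hp => ?_⟩
  rw [hV', hV']
  exact sum_le_sum_and_eq_of_unique_max hp hmax

/-- The RSU total utility
`V(p) = Σ_i (p_i − c)·(S_i·(R_i + B_i)/(A_i·p_i) + S_i/(A_i·q) − 1/q)` has a unique
maximizer on `(0, ∞)^I`, given componentwise by
`p_i* = √(q·c·S_i·(R_i + B_i)/(A_i − S_i))`. -/
theorem stmt12 (I : ℕ) (hI : 1 ≤ I) (q c : ℝ) (hq : 0 < q) (hc : 0 < c)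
    (S A R B : Fin I → ℝ) (hS : ∀ i, 0 < S i) (hA : ∀ i, S i < A i)
    (hR : ∀ i, 0 < R i) (hB : ∀ i, 0 ≤ B i)
    (V : (Fin I → ℝ) → ℝ)
    (hV : ∀ p, V p =
      ∑ i, (p i - c) * (S i * (R i + B i) / (A i * p i) + S i / (A i * q) - 1 / q))
    (pstar : Fin I → ℝ)
    (hpstar : ∀ i, pstar i = Real.sqrt (q * c * S i * (R i + B i) / (A i - S i))) :
    (∀ i, 0 < pstar i) ∧
    ∀ p : Fin I → ℝ, (∀ i, 0 < p i) → V p ≤ V pstar ∧ (V p = V pstar → p = pstar) :=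
  stmt12_general I q c hq hc S A R B hS hA hR hB V hV pstar hpstar
end

section
/- Let n ≥ 1, let q, c, S, R > 0 and D > 0, and let w_1,…,w_n > 0. Define φ : [0,∞)^n → ℝ by φ(p) = √( q·c·S·(R + Σ_{k=1}^n w_k·p_k)/D ). Then φ satisfies the three standard-function properties: (i) positivity: φ(p) > 0 for all p ≥ 0; (ii) monotonicity: if p ≤ p′ componentwise then φ(p) ≤ φ(p′), and if moreover Σ_k w_k·p_k < Σ_k w_k·p′_k then φ(p) < φ(p′); (iii) scalability: for every χ > 1 and every p ≥ 0, χ·φ(p) > φ(χ·p). -/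
/-- The RSU best-response price map `φ(p) = √(q·c·S·(R + Σ_k w_k·p_k)/D)` satisfies the
three standard-function properties on the nonnegative orthant: positivity,
monotonicity (strict when the weighted sum strictly increases), and scalability. -/
theorem stmt13 (n : ℕ) (hn : 1 ≤ n) (q c S R D : ℝ)
    (hq : 0 < q) (hc : 0 < c) (hS : 0 < S) (hR : 0 < R) (hD : 0 < D)
    (w : Fin n → ℝ) (hw : ∀ k, 0 < w k)
    (φ : (Fin n → ℝ) → ℝ)
    (hφ : ∀ p, φ p = Real.sqrt (q * c * S * (R + ∑ k, w k * p k) / D)) :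
    (∀ p : Fin n → ℝ, (∀ k, 0 ≤ p k) → 0 < φ p) ∧
    (∀ p p' : Fin n → ℝ, (∀ k, 0 ≤ p k) → (∀ k, p k ≤ p' k) →
      φ p ≤ φ p' ∧ ((∑ k, w k * p k) < (∑ k, w k * p' k) → φ p < φ p')) ∧
    (∀ χ : ℝ, 1 < χ → ∀ p : Fin n → ℝ, (∀ k, 0 ≤ p k) →
      φ (fun k => χ * p k) < χ * φ p) := by
  have hqcS : 0 < q * c * S := by positivity
  have sum_nonneg' : ∀ p : Fin n → ℝ, (∀ k, 0 ≤ p k) → 0 ≤ ∑ k, w k * p k := by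
    intro p hp
    exact Finset.sum_nonneg fun k _ => mul_nonneg (hw k).le (hp k)
  refine ⟨?_, ?_, ?_⟩
  · intro p hp
    rw [hφ]
    have h : 0 < q * c * S * (R + ∑ k, w k * p k) / D := by
      have := sum_nonneg' p hp
      have : 0 < R + ∑ k, w k * p k := by linarith
      positivity
    exact Real.sqrt_pos.mpr h
  · intro p p' hp hle
    have hsum : (∑ k, w k * p k) ≤ ∑ k, w k * p' k :=
      Finset.sum_le_sum fun k _ => mul_le_mul_of_nonneg_left (hle k) (hw k).le
    have hpos : 0 < R + ∑ k, w k * p k := by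
      have := sum_nonneg' p hp; linarith
    constructor
    · rw [hφ, hφ]
      apply Real.sqrt_le_sqrt
      apply div_le_div_of_nonneg_right (by nlinarith) hD.le
    · intro hlt
      rw [hφ, hφ]
      apply Real.sqrt_lt_sqrt
      · positivity
      · exact div_lt_div_of_pos_right (by nlinarith) hD
  · intro χ hχ p hp
    have hs := sum_nonneg' p hp
    have hsum : (∑ k, w k * (χ * p k)) = χ * ∑ k, w k * p k := by
      rw [Finset.mul_sum]; congr 1; ext k; ring
    rw [hφ, hφ, hsum]
    have hχ0 : 0 < χ := by linarith
    rw [show χ * Real.sqrt (q * c * S * (R + ∑ k, w k * p k) / D)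
        = Real.sqrt (χ ^ 2 * (q * c * S * (R + ∑ k, w k * p k) / D)) by
      rw [Real.sqrt_mul (by positivity), Real.sqrt_sq hχ0.le]]
    apply Real.sqrt_lt_sqrt
    · positivity
    · rw [show q * c * S * (R + χ * ∑ k, w k * p k) / D
          = q * c * S * (R + χ * ∑ k, w k * p k) / D by ring,
        show χ ^ 2 * (q * c * S * (R + ∑ k, w k * p k) / D)
          = χ ^ 2 * (q * c * S * (R + ∑ k, w k * p k)) / D by ring]
      apply div_lt_div_of_pos_right _ hD
      have : R + χ * ∑ k, w k * p k < χ ^ 2 * (R + ∑ k, w k * p k) := by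
        nlinarith [mul_nonneg (mul_nonneg hχ0.le hs) (sub_nonneg.mpr hχ.le),
          mul_pos (show (0:ℝ) < χ ^ 2 - 1 by nlinarith) hR]
      nlinarith
end

section
/- Let n ≥ 1 and let f : [0,∞)^n → ℝ^n be a map satisfying, componentwise: (i) positivity: f(p) > 0 for every p ≥ 0; (ii) monotonicity: if 0 ≤ p ≤ p′ then f(p) ≤ f(p′); (iii) scalability: for every χ > 1 and every p ≥ 0, χ·f(p) > f(χ·p). Then f has at most one fixed point in [0,∞)^n: if f(p) = p and f(p′) = p′ with p, p′ ≥ 0, then p = p′. -/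
lemma stmt14_aux (n : ℕ) (hn : 1 ≤ n) (f : (Fin n → ℝ) → Fin n → ℝ)
    (hpos : ∀ p : Fin n → ℝ, (∀ k, 0 ≤ p k) → ∀ k, 0 < f p k)
    (hmono : ∀ p p' : Fin n → ℝ, (∀ k, 0 ≤ p k) → (∀ k, p k ≤ p' k) →
      ∀ k, f p k ≤ f p' k)
    (hscal : ∀ χ : ℝ, 1 < χ → ∀ p : Fin n → ℝ, (∀ k, 0 ≤ p k) →
      ∀ k, f (fun i => χ * p i) k < χ * f p k)
    (p p' : Fin n → ℝ) (hp : ∀ k, 0 ≤ p k) (hp' : ∀ k, 0 ≤ p' k)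
    (hfp : f p = p) (hfp' : f p' = p') : ∀ k, p k ≤ p' k := by
  have hne : (Finset.univ : Finset (Fin n)).Nonempty := ⟨⟨0, hn⟩, Finset.mem_univ _⟩
  have hp'pos : ∀ k, 0 < p' k := fun k => by rw [← hfp']; exact hpos p' hp' k
  by_contra h
  push_neg at h
  obtain ⟨j, hj⟩ := h
  set χ := Finset.univ.sup' hne (fun k => p k / p' k) with hχ
  obtain ⟨k0, -, hk0⟩ := Finset.exists_mem_eq_sup' hne (fun k => p k / p' k)
  have hχ1 : 1 < χ := by
    have : 1 < p j / p' j := (one_lt_div (hp'pos j)).2 hj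
    exact lt_of_lt_of_le this (Finset.le_sup' (fun k => p k / p' k) (Finset.mem_univ j))
  have hle : ∀ i, p i ≤ χ * p' i := fun i => by
    have : p i / p' i ≤ χ := Finset.le_sup' (fun k => p k / p' k) (Finset.mem_univ i)
    rw [div_le_iff₀ (hp'pos i)] at this
    linarith [this]
  have h1 : f p k0 ≤ f (fun i => χ * p' i) k0 := hmono p _ hp hle k0
  have h2 : f (fun i => χ * p' i) k0 < χ * f p' k0 := hscal χ hχ1 p' hp' k0
  rw [hfp] at h1
  rw [hfp'] at h2
  have : χ * p' k0 = p k0 := by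
    have hχk : χ = p k0 / p' k0 := hχ.trans hk0
    rw [hχk, div_mul_cancel₀ _ (hp'pos k0).ne']
  linarith

/-- A standard function (positivity, monotonicity, scalability on the nonnegative
orthant of ℝⁿ) has at most one fixed point in the nonnegative orthant. -/
theorem stmt14 (n : ℕ) (hn : 1 ≤ n) (f : (Fin n → ℝ) → Fin n → ℝ)
    (hpos : ∀ p : Fin n → ℝ, (∀ k, 0 ≤ p k) → ∀ k, 0 < f p k)
    (hmono : ∀ p p' : Fin n → ℝ, (∀ k, 0 ≤ p k) → (∀ k, p k ≤ p' k) →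
      ∀ k, f p k ≤ f p' k)
    (hscal : ∀ χ : ℝ, 1 < χ → ∀ p : Fin n → ℝ, (∀ k, 0 ≤ p k) →
      ∀ k, f (fun i => χ * p i) k < χ * f p k)
    (p p' : Fin n → ℝ) (hp : ∀ k, 0 ≤ p k) (hp' : ∀ k, 0 ≤ p' k)
    (hfp : f p = p) (hfp' : f p' = p') : p = p' := by
  funext k
  exact le_antisymm
    (stmt14_aux n hn f hpos hmono hscal p p' hp hp' hfp hfp' k)
    (stmt14_aux n hn f hpos hmono hscal p' p hp' hp hfp' hfp k)
end
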